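/- arXiv:2111.01630 — 6 statements merged into one kernel-verified Lean document; each statement's English description precedes it below -/
import Mathlib

section
/- If a position p in an open game has game value α for the open player, then for every ordinal β ≤ α there is a finite sequence of legal moves from p reaching a position with game value exactly β for the same player. -/
/-!
Induction on `α`; the case `β = α` is trivial.  If `β < α`, walk down the stage-`α`
witness of `p` keeping the current position undecided at stage `β`: at a closed-player
position some move keeps it undecided (otherwise it would be decided at `β`), and since
won positions are decided at every stage, the walk ends at an open-player move into a
position `r` decided before `α`.  The value `γ` of `r` is at least `β`, for otherwise that
move would decide the previous position at stage `β`; as `γ < α`, induction applies to `r`.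
-/

/-- A two-player game of perfect information in extensive form, presented by its
positions, the move relation, the indicator of whose turn it is (`turnO p` means
the open player moves next at `p`) and the positions already won by the open player. -/
structure Game : Type 1 where
  Pos : Type
  move : Pos → Pos → Prop
  turnO : Pos → Prop
  won : Pos → Prop

/-- Auxiliary predicate for one stage of the game-value hierarchy: positions from which
the open player can force, through positions where the closed player never wins control,
either an immediate win or a move of his own into a position satisfying `lt`
(a position decided at an earlier stage). -/
inductive WinW (G : Game) (lt : G.Pos → Prop) : G.Pos → Prop
  | won (p : G.Pos) : G.won p → WinW G lt p
  | opn (p : G.Pos) : G.turnO p → (∃ q, G.move p q ∧ lt q) → WinW G lt p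
  | cls (p : G.Pos) : ¬ G.turnO p → ¬ G.won p →
      (∀ q, G.move p q → WinW G lt q) → WinW G lt p

/-- `Decided G α p` : the position `p` is decided in favour of the open player by stage
`α` of the transfinite game-value hierarchy.  -/
def Decided (G : Game) (α : Ordinal) : G.Pos → Prop :=
  WinW G (fun q => ∃ β : Ordinal, ∃ _ : β < α, Decided G β q)
termination_by α

/-- `Val G p α` : the position `p` has game value exactly `α` for the open player, i.e.
`α` is the least stage at which `p` is decided.  This agrees with the recursive
definition: won positions have value 0; if the open player moves next the value is the
minimum of the successors' values plus one; if the closed player moves next and all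
successors have defined values, the value is their supremum. -/
def Val (G : Game) (p : G.Pos) (α : Ordinal) : Prop :=
  Decided G α p ∧ ∀ β < α, ¬ Decided G β p

theorem decided_eq (G : Game) (α : Ordinal) :
    Decided G α = WinW G (fun q => ∃ β : Ordinal, ∃ _ : β < α, Decided G β q) := by
  rw [Decided]

namespace Decided

variable {G : Game} {p : G.Pos} {α β : Ordinal}

theorem of_won (hw : G.won p) : Decided G α p := by
  rw [decided_eq]
  exact .won p hw

theorem of_move {q : G.Pos} (ht : G.turnO p) (hm : G.move p q) (hβ : β < α)
    (hq : Decided G β q) : Decided G α p := by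
  rw [decided_eq]
  exact .opn p ht ⟨q, hm, β, hβ, hq⟩

theorem of_forall_move (ht : ¬ G.turnO p) (hw : ¬ G.won p)
    (h : ∀ q, G.move p q → Decided G α q) : Decided G α p := by
  rw [decided_eq] at h ⊢
  exact .cls p ht hw h

theorem exists_val (hp : Decided G α p) : ∃ γ ≤ α, Val G p γ := by
  obtain ⟨γ, hγ, hmin⟩ := wellFounded_lt.has_min {δ | Decided G δ p} ⟨α, hp⟩
  exact ⟨γ, not_lt.1 (hmin α hp), hγ, fun δ hδ hd => hmin δ hd hδ⟩

end Decided

theorem exists_reachable_val_of_winW {G : Game} {α β : Ordinal} {p : G.Pos}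
    (hp : WinW G (fun q => ∃ γ : Ordinal, ∃ _ : γ < α, Decided G γ q) p)
    (hβ : ¬ Decided G β p) :
    ∃ r γ, Relation.ReflTransGen G.move p r ∧ β ≤ γ ∧ γ < α ∧ Val G r γ := by
  induction hp with
  | won p hw => exact absurd (.of_won hw) hβ
  | opn p ht hr =>
    obtain ⟨r, hm, δ, hδ, hr⟩ := hr
    obtain ⟨γ, hγδ, hγ⟩ := hr.exists_val
    have hβγ : β ≤ γ := not_lt.1 fun hlt => hβ (.of_move ht hm hlt hγ.1)
    exact ⟨r, γ, .single hm, hβγ, hγδ.trans_lt hδ, hγ⟩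
  | cls p ht hw _ ih =>
    obtain ⟨q, hm, hq⟩ : ∃ q, G.move p q ∧ ¬ Decided G β q := by
      by_contra! h
      exact hβ (.of_forall_move ht hw h)
    obtain ⟨r, γ, hqr, hr⟩ := ih q hm hq
    exact ⟨r, γ, .head hm hqr, hr⟩

/-- If a position `p` in an open game has game value `α` for the open player, then for
every ordinal `β ≤ α` there is a finite sequence of legal moves from `p` reaching a
position with game value exactly `β` for the same player. -/
theorem stmt4 (G : Game) (p : G.Pos) (α : Ordinal) (hp : Val G p α)
    (β : Ordinal) (hβ : β ≤ α) :
    ∃ q : G.Pos, Relation.ReflTransGen G.move p q ∧ Val G q β := by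
  induction α using WellFoundedLT.induction generalizing p with
  | ind α ih =>
    obtain hlt | rfl := hβ.lt_or_eq
    · have hd := hp.1
      rw [decided_eq] at hd
      obtain ⟨r, γ, hpr, hβγ, hγα, hr⟩ := exists_reachable_val_of_winW hd (hp.2 β hlt)
      obtain ⟨q, hrq, hq⟩ := ih γ hγα r hr hβγ
      exact ⟨q, hpr.trans hrq, hq⟩
    · exact ⟨p, .refl, hp⟩
end

section
/- (Hex Theorem) In any complete 2-colouring of the n×n hexagonal Hex board (every tile coloured Red or Blue), at least one player has a winning chain: either a Red-connected chain joining the two Red sides, or a Blue-connected chain joining the two Blue sides. -/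
/-!
The Hex board embeds in the Y board `{(i, j) | 0 ≤ i, 0 ≤ j, i + j ≤ 2n - 2}` once the extra
cells with `n ≤ i` are painted Red and the others Blue. On a Y board some colour always has a
connected set meeting all three sides: give each cell `p` of the board of side `k` the majority
colour of the triangle `{p, p + (1, 0), p + (0, 1)}` of the board of side `k + 1`. Two adjacent
triangles share one cell; if it lacks their common majority colour, the other cells of both
triangles have it, and two of those are adjacent. Hence a winning set for the majority colouring
lifts to one for the original colouring, and the board of side 1 is trivial.
A Red winning set contains a path from the side `i = 0` to the side `i + j = 2n - 2`; its Red
cells off the Hex board have `n ≤ i`, so the path reaches the row `i = n - 1` before it first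
leaves the Hex board. Blue is symmetric, with `i` and `j` exchanged.
-/

/-- Hexagonal adjacency on the grid model of the Hex board: the six neighbours of a
tile are obtained by the displacements `(±1,0)`, `(0,±1)`, `(1,-1)` and `(-1,1)`. -/
def hexAdj (p q : ℤ × ℤ) : Prop :=
  (p.1 - q.1, p.2 - q.2) ∈
    ({(1, 0), (-1, 0), (0, 1), (0, -1), (1, -1), (-1, 1)} : Set (ℤ × ℤ))

/-- A winning chain for the player `red` (Red if `red = true`, Blue otherwise) in a
complete colouring `c` of the `n × n` Hex board: a nonempty list of tiles of that
player's colour, consecutively hex-adjacent, containing a tile on each of that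
player's two opposite sides (Red joins the rows `0` and `n-1`, Blue joins the
columns `0` and `n-1`). -/
def WinningChain (n : ℕ) (c : Fin n × Fin n → Bool) (red : Bool) : Prop :=
  ∃ l : List (Fin n × Fin n), l ≠ [] ∧
    (∀ t ∈ l, c t = red) ∧
    l.Chain' (fun a b => hexAdj ((a.1 : ℤ), (a.2 : ℤ)) ((b.1 : ℤ), (b.2 : ℤ))) ∧
    (if red then
      (∃ a ∈ l, (a.1 : ℕ) = 0) ∧ (∃ b ∈ l, (b.1 : ℕ) = n - 1)
    else
      (∃ a ∈ l, (a.2 : ℕ) = 0) ∧ (∃ b ∈ l, (b.2 : ℕ) = n - 1))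


namespace Hex

open Relation

/-- Note that `PathIn r S a a` holds even when `a ∉ S`. -/
def PathIn {α : Type*} (r : α → α → Prop) (S : Set α) : α → α → Prop :=
  ReflTransGen fun a b => a ∈ S ∧ b ∈ S ∧ r a b

namespace PathIn

variable {α β : Type*} {r : α → α → Prop} {S T : Set α} {a b d : α}

theorem single (ha : a ∈ S) (hb : b ∈ S) (h : r a b) : PathIn r S a b :=
  ReflTransGen.single ⟨ha, hb, h⟩

theorem trans (hab : PathIn r S a b) (hbd : PathIn r S b d) : PathIn r S a d :=
  ReflTransGen.trans hab hbd

theorem symm (hr : ∀ x y, r x y → r y x) (h : PathIn r S a b) : PathIn r S b a := by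
  induction h with
  | refl => exact .refl
  | tail _ step ih => exact ReflTransGen.head ⟨step.2.1, step.1, hr _ _ step.2.2⟩ ih

theorem mono (hST : S ⊆ T) (h : PathIn r S a b) : PathIn r T a b :=
  ReflTransGen.mono (fun _ _ ⟨ha, hb, h⟩ => ⟨hST ha, hST hb, h⟩) _ _ h

theorem mem (h : PathIn r S a b) (ha : a ∈ S) : b ∈ S := by
  induction h with
  | refl => exact ha
  | tail _ step _ => exact step.2.1

theorem stays_or_exits (h : PathIn r T a b) (ha : a ∈ T ∩ S) :
    PathIn r (T ∩ S) a b ∨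
      ∃ t u, PathIn r (T ∩ S) a t ∧ t ∈ T ∩ S ∧ u ∈ T \ S ∧ r t u := by
  induction h with
  | refl => exact Or.inl .refl
  | @tail t u _ step ih =>
    obtain ⟨ht, hu, htu⟩ := step
    rcases ih with hat | exit
    · have htS := hat.mem ha
      by_cases huS : u ∈ S
      · exact Or.inl (hat.trans (single htS ⟨hu, huS⟩ htu))
      · exact Or.inr ⟨t, u, hat, htS, ⟨hu, huS⟩, htu⟩
    · exact Or.inr exit

theorem exists_preimage {f : β → α} (hS : S ⊆ Set.range f) {x : β}
    (h : PathIn r S (f x) a) :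
    ∃ y, f y = a ∧ PathIn (fun u v => r (f u) (f v)) (f ⁻¹' S) x y := by
  induction h with
  | refl => exact ⟨x, rfl, .refl⟩
  | tail _ step ih =>
    obtain ⟨b, rfl, hab⟩ := ih
    obtain ⟨hb, hd, hbd⟩ := step
    obtain ⟨d, rfl⟩ := hS hd
    exact ⟨d, rfl, hab.trans (single (S := f ⁻¹' S) hb hd hbd)⟩

theorem exists_isChain (h : PathIn r S a b) (ha : a ∈ S) :
    ∃ l : List α, l ≠ [] ∧ (∀ y ∈ l, y ∈ S) ∧ l.IsChain r ∧ a ∈ l ∧ b ∈ l := by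
  obtain ⟨l, hl, hlast⟩ := List.exists_isChain_cons_of_relationReflTransGen h
  refine ⟨a :: l, List.cons_ne_nil _ _, ?_, hl.imp fun _ _ h => h.2.2, List.mem_cons_self,
    hlast ▸ List.getLast_mem _⟩
  intro y hy
  rcases List.mem_cons.mp hy with rfl | hy
  · exact ha
  · exact hl.cons_induction (· ∈ S) _ (fun _ _ h _ => h.2.1) ha y hy

end PathIn

theorem hexAdj_iff {p q : ℤ × ℤ} :
    hexAdj p q ↔
      (p.1 - q.1 = 1 ∧ p.2 - q.2 = 0) ∨ (p.1 - q.1 = -1 ∧ p.2 - q.2 = 0) ∨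
      (p.1 - q.1 = 0 ∧ p.2 - q.2 = 1) ∨ (p.1 - q.1 = 0 ∧ p.2 - q.2 = -1) ∨
      (p.1 - q.1 = 1 ∧ p.2 - q.2 = -1) ∨ (p.1 - q.1 = -1 ∧ p.2 - q.2 = 1) := by
  simp [hexAdj, Prod.ext_iff]

theorem hexAdj_comm (p q : ℤ × ℤ) (h : hexAdj p q) : hexAdj q p := by
  rw [hexAdj_iff] at h ⊢
  omega

def triangle (p : ℤ × ℤ) : Set (ℤ × ℤ) := {p, p + (1, 0), p + (0, 1)}

theorem mem_triangle {p a : ℤ × ℤ} :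
    a ∈ triangle p ↔
      (a.1 = p.1 ∧ a.2 = p.2) ∨ (a.1 = p.1 + 1 ∧ a.2 = p.2) ∨ (a.1 = p.1 ∧ a.2 = p.2 + 1) := by
  simp [triangle, Prod.ext_iff]

theorem hexAdj_of_mem_triangle {p a b : ℤ × ℤ} (ha : a ∈ triangle p) (hb : b ∈ triangle p)
    (hab : a ≠ b) : hexAdj a b := by
  rw [mem_triangle] at ha hb
  rw [Ne, Prod.ext_iff] at hab
  rw [hexAdj_iff]
  omega

theorem exists_shared_cell_of_hexAdj {p q : ℤ × ℤ} (h : hexAdj p q) :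
    ∃ w ∈ triangle p, w ∈ triangle q ∧
      ∃ a ∈ triangle p, ∃ b ∈ triangle q, a ≠ w ∧ b ≠ w ∧ hexAdj a b := by
  obtain ⟨p1, p2⟩ := p
  obtain ⟨q1, q2⟩ := q
  rw [hexAdj_iff] at h
  rcases h with h | h | h | h | h | h <;>
  [refine ⟨(p1, p2), ?_, ?_, (p1, p2 + 1), ?_, (p1 - 1, p2 + 1), ?_⟩;
    refine ⟨(p1 + 1, p2), ?_, ?_, (p1, p2 + 1), ?_, (p1 + 1, p2 + 1), ?_⟩;
    refine ⟨(p1, p2), ?_, ?_, (p1 + 1, p2), ?_, (p1 + 1, p2 - 1), ?_⟩;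
    refine ⟨(p1, p2 + 1), ?_, ?_, (p1 + 1, p2), ?_, (p1 + 1, p2 + 1), ?_⟩;
    refine ⟨(p1, p2 + 1), ?_, ?_, (p1, p2), ?_, (p1 - 1, p2 + 1), ?_⟩;
    refine ⟨(p1 + 1, p2), ?_, ?_, (p1, p2), ?_, (p1 + 1, p2 - 1), ?_⟩] <;>
    simp only [mem_triangle, hexAdj_iff, ne_eq, Prod.ext_iff, true_and, and_true, true_or,
      or_true] at h ⊢ <;>
    omega

/-- The Y board of side `k + 1`. -/
def yBoard (k : ℕ) : Set (ℤ × ℤ) := {p | 0 ≤ p.1 ∧ 0 ≤ p.2 ∧ p.1 + p.2 ≤ k}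

theorem triangle_subset_yBoard {k : ℕ} {p : ℤ × ℤ} (hp : p ∈ yBoard k) :
    triangle p ⊆ yBoard (k + 1) := by
  intro a ha
  rw [mem_triangle] at ha
  obtain ⟨h1, h2, h3⟩ := hp
  refine ⟨?_, ?_, ?_⟩ <;> push_cast <;> omega

def majority (c : ℤ × ℤ → Bool) (p : ℤ × ℤ) : Bool :=
  if c (p + (1, 0)) = c (p + (0, 1)) then c (p + (1, 0)) else c p

theorem eq_or_eq_of_majority_eq {c : ℤ × ℤ → Bool} {p a b : ℤ × ℤ} {x : Bool}
    (hp : majority c p = x) (ha : a ∈ triangle p) (hb : b ∈ triangle p) (hab : a ≠ b) :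
    c a = x ∨ c b = x := by
  have two_of := (by decide : ∀ u v w x : Bool, (if v = w then v else u) = x →
    (u = x ∨ v = x) ∧ (u = x ∨ w = x) ∧ (v = x ∨ w = x)) _ _ _ _ hp
  simp only [triangle, Set.mem_insert_iff, Set.mem_singleton_iff] at ha hb
  rcases ha with rfl | rfl | rfl <;> rcases hb with rfl | rfl | rfl <;>
    first | exact absurd rfl hab | tauto

theorem exists_mem_triangle_of_majority_eq {c : ℤ × ℤ → Bool} {p : ℤ × ℤ} {x : Bool}
    (hp : majority c p = x) : ∃ a ∈ triangle p, c a = x := by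
  rcases eq_or_eq_of_majority_eq hp (a := p) (b := p + (1, 0)) (by simp [triangle])
    (by simp [triangle]) (by simp) with h | h
  exacts [⟨_, by simp [triangle], h⟩, ⟨_, by simp [triangle], h⟩]

theorem exists_hexAdj_of_majority_eq {c : ℤ × ℤ → Bool} {p q : ℤ × ℤ} {x : Bool}
    (h : hexAdj p q) (hp : majority c p = x) (hq : majority c q = x) :
    ∃ a ∈ triangle p, ∃ b ∈ triangle q, c a = x ∧ c b = x ∧ (a = b ∨ hexAdj a b) := by
  obtain ⟨w, hwp, hwq, a, ha, b, hb, haw, hbw, hab⟩ := exists_shared_cell_of_hexAdj h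
  by_cases hw : c w = x
  · exact ⟨w, hwp, w, hwq, hw, hw, Or.inl rfl⟩
  · exact ⟨a, ha, b, hb, (eq_or_eq_of_majority_eq hp ha hwp haw).resolve_right hw,
      (eq_or_eq_of_majority_eq hq hb hwq hbw).resolve_right hw, Or.inr hab⟩

section YGame

def yCells (k : ℕ) (c : ℤ × ℤ → Bool) (x : Bool) : Set (ℤ × ℤ) := {q ∈ yBoard k | c q = x}

variable {k : ℕ} {c : ℤ × ℤ → Bool} {x : Bool}

theorem pathIn_of_mem_triangle {p a b : ℤ × ℤ} (hp : p ∈ yBoard k) (ha : a ∈ triangle p)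
    (hb : b ∈ triangle p) (hax : c a = x) (hbx : c b = x) :
    PathIn hexAdj (yCells (k + 1) c x) a b := by
  by_cases hab : a = b
  · exact hab ▸ .refl
  · exact .single ⟨triangle_subset_yBoard hp ha, hax⟩ ⟨triangle_subset_yBoard hp hb, hbx⟩
      (hexAdj_of_mem_triangle ha hb hab)

theorem pathIn_of_pathIn_majority {p q a b : ℤ × ℤ}
    (h : PathIn hexAdj (yCells k (majority c) x) p q) (hp : p ∈ yBoard k)
    (ha : a ∈ triangle p) (hax : c a = x) (hb : b ∈ triangle q) (hbx : c b = x) :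
    PathIn hexAdj (yCells (k + 1) c x) a b := by
  induction h generalizing b with
  | refl => exact pathIn_of_mem_triangle hp ha hb hax hbx
  | tail _ step ih =>
    obtain ⟨⟨hr, hrx⟩, ⟨hs, hsx⟩, hrs⟩ := step
    obtain ⟨a', ha', b', hb', ha'x, hb'x, hab'⟩ := exists_hexAdj_of_majority_eq hrs hrx hsx
    refine (ih ha' ha'x).trans (PathIn.trans ?_ (pathIn_of_mem_triangle hs hb' hb hb'x hbx))
    rcases hab' with rfl | hab'
    · exact .refl
    · exact .single ⟨triangle_subset_yBoard hr ha', ha'x⟩ ⟨triangle_subset_yBoard hs hb', hb'x⟩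
        hab'

def YWin (k : ℕ) (c : ℤ × ℤ → Bool) (x : Bool) : Prop :=
  ∃ p ∈ yCells k c x, (∃ a, PathIn hexAdj (yCells k c x) p a ∧ a.1 = 0) ∧
    (∃ b, PathIn hexAdj (yCells k c x) p b ∧ b.2 = 0) ∧
    ∃ e, PathIn hexAdj (yCells k c x) p e ∧ e.1 + e.2 = k

theorem YWin.of_majority (h : YWin k (majority c) x) : YWin (k + 1) c x := by
  obtain ⟨p, hp, ⟨a, hpa, ha⟩, ⟨b, hpb, hb⟩, ⟨e, hpe, he⟩⟩ := h
  obtain ⟨s, hs, hsx⟩ := exists_mem_triangle_of_majority_eq hp.2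
  have reach : ∀ {q}, PathIn hexAdj (yCells k (majority c) x) p q → ∀ u v, u ∈ triangle q →
      v ∈ triangle q → u ≠ v →
      PathIn hexAdj (yCells (k + 1) c x) s u ∨ PathIn hexAdj (yCells (k + 1) c x) s v := by
    intro q hpq u v hu hv huv
    exact (eq_or_eq_of_majority_eq (hpq.mem hp).2 hu hv huv).imp
      (pathIn_of_pathIn_majority hpq hp.1 hs hsx hu)
      (pathIn_of_pathIn_majority hpq hp.1 hs hsx hv)
  refine ⟨s, ⟨triangle_subset_yBoard hp.1 hs, hsx⟩, ?_, ?_, ?_⟩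
  · rcases reach hpa a (a + (0, 1)) (by simp [triangle]) (by simp [triangle]) (by simp) with h | h
    exacts [⟨_, h, ha⟩, ⟨_, h, by simp [ha]⟩]
  · rcases reach hpb b (b + (1, 0)) (by simp [triangle]) (by simp [triangle]) (by simp) with h | h
    exacts [⟨_, h, hb⟩, ⟨_, h, by simp [hb]⟩]
  · rcases reach hpe (e + (1, 0)) (e + (0, 1)) (by simp [triangle]) (by simp [triangle])
      (by simp) with h | h
    exacts [⟨_, h, by push_cast; simp; omega⟩, ⟨_, h, by push_cast; simp; omega⟩]

theorem exists_yWin (k : ℕ) (c : ℤ × ℤ → Bool) : ∃ x, YWin k c x := by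
  induction k generalizing c with
  | zero => exact ⟨c 0, 0, ⟨⟨le_rfl, le_rfl, by simp⟩, rfl⟩, ⟨0, .refl, rfl⟩, ⟨0, .refl, rfl⟩,
      ⟨0, .refl, by simp⟩⟩
  | succ k ih =>
    obtain ⟨x, h⟩ := ih (majority c)
    exact ⟨x, h.of_majority⟩

end YGame

section HexBoard

def boardPos {n : ℕ} (a : Fin n × Fin n) : ℤ × ℤ := ((a.1 : ℤ), (a.2 : ℤ))

def hexBoard (n : ℕ) : Set (ℤ × ℤ) := {p | 0 ≤ p.1 ∧ p.1 < n ∧ 0 ≤ p.2 ∧ p.2 < n}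

theorem boardPos_mem_hexBoard {n : ℕ} (a : Fin n × Fin n) : boardPos a ∈ hexBoard n := by
  simp [boardPos, hexBoard]

instance (n : ℕ) : DecidablePred (· ∈ hexBoard n) :=
  fun _ => inferInstanceAs (Decidable (_ ∧ _))

theorem hexBoard_subset_range (n : ℕ) : hexBoard n ⊆ Set.range (boardPos (n := n)) := by
  rintro p ⟨h1, h2, h3, h4⟩
  exact ⟨(⟨p.1.toNat, by omega⟩, ⟨p.2.toNat, by omega⟩), by simp [boardPos, h1, h3]⟩

def hexExtend (n : ℕ) (c : Fin n × Fin n → Bool) (p : ℤ × ℤ) : Bool :=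
  if h : p ∈ hexBoard n then
    c (⟨p.1.toNat, by have := h.1; have := h.2.1; omega⟩, ⟨p.2.toNat, by have := h.2.2; omega⟩)
  else decide ((n : ℤ) ≤ p.1)

theorem hexExtend_boardPos {n : ℕ} (c : Fin n × Fin n → Bool) (a : Fin n × Fin n) :
    hexExtend n c (boardPos a) = c a := by
  rw [hexExtend, dif_pos (boardPos_mem_hexBoard a)]
  simp [boardPos]

/-- The coordinate that player `x` has to carry from `0` to `n - 1`. -/
def axis : Bool → ℤ × ℤ → ℤ
  | true => Prod.fst
  | false => Prod.snd

theorem axis_le_add_one_of_hexAdj (x : Bool) {p q : ℤ × ℤ} (h : hexAdj p q) :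
    axis x q ≤ axis x p + 1 := by
  rw [hexAdj_iff] at h
  cases x <;> simp only [axis] <;> omega

variable {n k : ℕ} {c : Fin n × Fin n → Bool} {x : Bool}

theorem le_axis_of_notMem_hexBoard {q : ℤ × ℤ} (hq : q ∈ yCells k (hexExtend n c) x)
    (hq' : q ∉ hexBoard n) : (n : ℤ) ≤ axis x q := by
  obtain ⟨⟨h1, h2, -⟩, hqx⟩ := hq
  rw [hexExtend, dif_neg hq'] at hqx
  simp only [hexBoard, Set.mem_ofPred_eq] at hq'
  cases x <;> simp only [axis, decide_eq_true_eq, decide_eq_false_iff_not] at hqx ⊢ <;> omega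

theorem sub_one_le_axis {q : ℤ × ℤ} (hq : q ∈ yCells (2 * n - 2) (hexExtend n c) x)
    (hsum : q.1 + q.2 = (2 * n - 2 : ℕ)) : (n : ℤ) - 1 ≤ axis x q := by
  by_cases hq' : q ∈ hexBoard n
  · obtain ⟨h1, h2, h3, h4⟩ := hq'
    cases x <;> simp only [axis] <;> omega
  · linarith [le_axis_of_notMem_hexBoard hq hq']

theorem exists_boardPath_of_yWin (hn : 0 < n) (h : YWin (2 * n - 2) (hexExtend n c) x) :
    ∃ a b : Fin n × Fin n, c a = x ∧ axis x (boardPos a) = 0 ∧ axis x (boardPos b) = n - 1 ∧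
      PathIn (fun u v => hexAdj (boardPos u) (boardPos v)) {a | c a = x} a b := by
  set T := yCells (2 * n - 2) (hexExtend n c) x
  obtain ⟨p, hp, ⟨a, hpa, ha⟩, ⟨b, hpb, hb⟩, ⟨e, hpe, he⟩⟩ := h
  obtain ⟨s, hps, hs⟩ : ∃ s, PathIn hexAdj T p s ∧ axis x s = 0 := by
    cases x
    exacts [⟨b, hpb, hb⟩, ⟨a, hpa, ha⟩]
  have hsT := hps.mem hp
  have hsB : s ∈ hexBoard n := by
    by_contra hs'
    linarith [le_axis_of_notMem_hexBoard hsT hs']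
  obtain ⟨t, hst, ht⟩ : ∃ t, PathIn hexAdj (T ∩ hexBoard n) s t ∧ (n : ℤ) - 1 ≤ axis x t := by
    rcases ((hps.symm hexAdj_comm).trans hpe).stays_or_exits ⟨hsT, hsB⟩ with
      hse | ⟨t, u, hst, ht, hu, htu⟩
    · exact ⟨e, hse, sub_one_le_axis (hpe.mem hp) he⟩
    · exact ⟨t, hst, by linarith [le_axis_of_notMem_hexBoard hu.1 hu.2,
        axis_le_add_one_of_hexAdj x htu]⟩
  obtain ⟨a₀, rfl⟩ := hexBoard_subset_range n hsB
  obtain ⟨b₀, rfl, hab⟩ :=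
    hst.exists_preimage (Set.inter_subset_right.trans (hexBoard_subset_range n))
  have hcell : ∀ y, boardPos y ∈ T → c y = x := fun y hy => hexExtend_boardPos c y ▸ hy.2
  refine ⟨a₀, b₀, hcell a₀ hsT, hs, ?_, hab.mono fun y hy => hcell y hy.1⟩
  have : axis x (boardPos b₀) < n := by
    cases x <;> simp [axis, boardPos]
  omega

theorem winningChain_of_pathIn {a b : Fin n × Fin n}
    (h : PathIn (fun u v => hexAdj (boardPos u) (boardPos v)) {a | c a = x} a b)
    (hax : c a = x) (ha : axis x (boardPos a) = 0) (hb : axis x (boardPos b) = n - 1) :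
    WinningChain n c x := by
  obtain ⟨l, hne, hl, hch, hal, hbl⟩ := h.exists_isChain hax
  refine ⟨l, hne, hl, hch, ?_⟩
  cases x <;> simp only [axis, boardPos] at ha hb <;>
    simp only [Bool.false_eq_true, if_true, if_false] <;>
    exact ⟨⟨a, hal, by omega⟩, ⟨b, hbl, by omega⟩⟩

end HexBoard

end Hex

open Hex in
/-- Hex Theorem: in any complete 2-colouring of the `n × n` Hex board, at least one
player has a winning chain joining his pair of opposite sides. -/
theorem stmt9 (n : ℕ) (hn : 0 < n) (c : Fin n × Fin n → Bool) :
    WinningChain n c true ∨ WinningChain n c false := by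
  obtain ⟨x, hx⟩ := exists_yWin (2 * n - 2) (hexExtend n c)
  obtain ⟨a, b, hax, ha, hb, hab⟩ := exists_boardPath_of_yWin hn hx
  cases x
  · exact Or.inr (winningChain_of_pathIn hab hax ha hb)
  · exact Or.inl (winningChain_of_pathIn hab hax ha hb)
end

section
/- In finite Hex (a finite positional game with no draws satisfying the board symmetry exchanging the players' sides), the second player has no winning strategy; consequently the first player has a winning strategy. -/
variable {B : Type}

/-- The vertices marked by the first player over the play `s` (the moves at the even
stages; a vertex counts as marked by the player who marks it first). -/
def FirstMoves (s : ℕ → B) : Set B :=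
  {b | ∃ i : ℕ, i % 2 = 0 ∧ s i = b ∧ ∀ j < i, s j ≠ b}

/-- The vertices marked by the second player over the play `s` (the moves at the odd
stages; a vertex counts as marked by the player who marks it first). -/
def SecondMoves (s : ℕ → B) : Set B :=
  {b | ∃ i : ℕ, i % 2 = 1 ∧ s i = b ∧ ∀ j < i, s j ≠ b}

/-- A valid play: the players always mark a previously unmarked vertex, as long as an
unmarked vertex remains. -/
def ValidPlay (s : ℕ → B) : Prop :=
  ∀ n : ℕ, (∃ b : B, ∀ m < n, s m ≠ b) → ∀ m < n, s m ≠ s n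

/-- The play `s` conforms to the strategy `σ` for the first player: at each even stage
the move made is the one prescribed by `σ` on the history so far. -/
def ConformsFirst (σ : List B → B) (s : ℕ → B) : Prop :=
  ∀ n : ℕ, n % 2 = 0 → s n = σ ((List.range n).map s)

/-- The play `s` conforms to the strategy `τ` for the second player: at each odd stage
the move made is the one prescribed by `τ` on the history so far. -/
def ConformsSecond (τ : List B → B) (s : ℕ → B) : Prop :=
  ∀ n : ℕ, n % 2 = 1 → s n = τ ((List.range n).map s)

/-- A legal strategy always chooses a previously unchosen vertex, as long as one exists. -/
def LegalStrat (σ : List B → B) : Prop :=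
  ∀ l : List B, (∃ b : B, b ∉ l) → σ l ∉ l


/-! Backward induction over the finite game tree. Without draws the game is determined: if the
first player could not force a set of `F`, the second player could force a set of `S`, and
transporting that strategy along the side-swapping symmetry `g` would let the first player force a
set of `F` while moving second. But neither an extra stone nor the right to move is ever a
disadvantage, so the first player can then also force a set of `F` moving first, a contradiction.
Playing the resulting strategy against a hypothetical winning strategy of the second player
would make both players win the same play, which no-tie forbids. -/

open Finset

theorem Finset.exists_notMem_of_card_lt [Fintype B] {s : Finset B} (h : #s < Fintype.card B) :
    ∃ b, b ∉ s :=
  (exists_mem_notMem_of_card_lt_card (t := univ) h).imp fun _ => And.right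

theorem ValidPlay.ne_of_lt [Fintype B] {s : ℕ → B} (hs : ValidPlay s) {m n : ℕ} (hmn : m < n)
    (hn : n < Fintype.card B) : s m ≠ s n := by
  classical
  obtain ⟨b, hb⟩ := exists_notMem_of_card_lt (s := (range n).image s)
    (card_image_le.trans_lt (by rwa [card_range]))
  exact hs n ⟨b, fun i hi hib => hb (mem_image.2 ⟨i, mem_range.2 hi, hib⟩)⟩ m hmn

theorem disjoint_firstMoves_secondMoves (s : ℕ → B) : Disjoint (FirstMoves s) (SecondMoves s) := by
  refine Set.disjoint_left.2 ?_
  rintro b ⟨i, hi, rfl, hi'⟩ ⟨j, hj, hji, hj'⟩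
  rcases lt_trichotomy i j with hij | rfl | hji'
  · exact hj' i hij rfl
  · omega
  · exact hi' j hji' hji

def history (μ : List B → B) : ℕ → List B
  | 0 => []
  | n + 1 => history μ n ++ [μ (history μ n)]

theorem map_range_history (μ : List B → B) (n : ℕ) :
    (List.range n).map (fun i => μ (history μ i)) = history μ n := by
  induction n with
  | zero => rfl
  | succ n ih => rw [List.range_succ, List.map_append, ih]; rfl

theorem exists_validPlay_conforming {σ τ : List B → B} (hσ : LegalStrat σ) (hτ : LegalStrat τ) :
    ∃ s, ValidPlay s ∧ ConformsFirst σ s ∧ ConformsSecond τ s := by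
  set μ : List B → B := fun l => if l.length % 2 = 0 then σ l else τ l
  have hhist := map_range_history μ
  have hlen (n : ℕ) : (history μ n).length = n := by rw [← hhist]; simp
  refine ⟨fun n => μ (history μ n), ?_, fun n hn => ?_, fun n hn => ?_⟩
  · rintro n ⟨b, hb⟩ m hm (hmn : μ (history μ m) = μ (history μ n))
    have hfree : ∃ b, b ∉ history μ n := ⟨b, by rw [← hhist]; simpa using hb⟩
    have hlegal : μ (history μ n) ∉ history μ n := by
      simp only [μ]
      split_ifs
      exacts [hσ _ hfree, hτ _ hfree]
    apply hlegal
    rw [← hmn, ← hhist]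
    exact List.mem_map_of_mem (List.mem_range.2 hm)
  · show μ (history μ n) = σ ((List.range n).map fun i => μ (history μ i))
    rw [hhist]
    simp [μ, hlen, hn]
  · show μ (history μ n) = τ ((List.range n).map fun i => μ (history μ i))
    rw [hhist]
    simp [μ, hlen, hn]

section Forcing

variable [DecidableEq B]

/-- `CanForce F k myTurn A D` says that a player holding the stones `A`, facing the opponent's
stones `D` with `k` empty cells left (meaningful when `#(A ∪ D) + k` is the size of the board),
and moving next iff `myTurn`, can make its final stones contain a member of `F`. -/
def CanForce (F : Set (Set B)) : ℕ → Bool → Finset B → Finset B → Prop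
  | 0, _, A, _ => ∃ f ∈ F, f ⊆ ↑A
  | k + 1, true, A, D => ∃ b ∉ A ∪ D, CanForce F k false (insert b A) D
  | k + 1, false, A, D => ∀ b ∉ A ∪ D, CanForce F k true A (insert b D)

theorem CanForce.image {F S : Set (Set B)} {g : B ≃ B} (hg : ∀ t ∈ S, g '' t ∈ F) {k : ℕ}
    {t : Bool} {A D : Finset B} (h : CanForce S k t A D) :
    CanForce F k t (A.image g) (D.image g) := by
  induction k generalizing t A D with
  | zero =>
    obtain ⟨u, hu, huA⟩ := h
    exact ⟨g '' u, hg u hu, by rw [coe_image]; exact Set.image_mono huA⟩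
  | succ k ih =>
    cases t with
    | true =>
      obtain ⟨b, hb, hf⟩ := h
      refine ⟨g b, ?_, ?_⟩
      · rwa [← image_union, g.injective.mem_finset_image]
      · simpa only [image_insert] using ih hf
    | false =>
      intro b hb
      rw [← image_union] at hb
      have hfree : g.symm b ∉ A ∪ D := fun hmem => hb (mem_image.2 ⟨_, hmem, g.apply_symm_apply b⟩)
      simpa only [image_insert, g.apply_symm_apply] using ih (h _ hfree)

variable [Fintype B] {F S : Set (Set B)}

theorem canForce_insert {k : ℕ} {t : Bool} {A D : Finset B} {c : B}
    (hcard : #(A ∪ D) + (k + 1) = Fintype.card B) (hc : c ∉ A ∪ D)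
    (h : CanForce F (k + 1) t A D) : CanForce F k t (insert c A) D := by
  induction k generalizing t A D c with
  | zero =>
    cases t with
    | true =>
      obtain ⟨b, hb, hf⟩ := h
      obtain rfl : b = c := by
        by_contra hbc
        have := card_lt_univ_of_notMem (s := insert c (A ∪ D)) (x := b) (by simp_all)
        rw [card_insert_of_notMem hc] at this
        omega
      exact hf
    | false =>
      obtain ⟨f, hf, hfA⟩ := h c hc
      exact ⟨f, hf, hfA.trans (by simp)⟩
  | succ k ih =>
    cases t with
    | true =>
      obtain ⟨b, hb, hf⟩ := h
      have hcard' : #(insert b A ∪ D) + (k + 1) = Fintype.card B := by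
        rw [insert_union, card_insert_of_notMem hb]; omega
      by_cases hbc : b = c
      · subst hbc
        -- `c` was the move itself, so a spare move remains: spend it on any empty cell (`ih`)
        obtain ⟨e, he⟩ := exists_notMem_of_card_lt (s := insert b A ∪ D) (by omega)
        exact ⟨e, he, ih hcard' he hf⟩
      · refine ⟨b, by simp_all, ?_⟩
        rw [insert_comm]
        exact ih hcard' (by simp_all [eq_comm]) hf
    | false =>
      intro b hb
      have hb' : b ∉ A ∪ D := by simp_all
      exact ih (by rw [union_insert, card_insert_of_notMem hb']; omega) (by simp_all [eq_comm])
        (h b hb')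

theorem canForce_true_of_false {k : ℕ} {A D : Finset B} (hcard : #(A ∪ D) + k = Fintype.card B)
    (h : CanForce F k false A D) : CanForce F k true A D := by
  cases k with
  | zero => exact h
  | succ k =>
    obtain ⟨c, hc⟩ := exists_notMem_of_card_lt (s := A ∪ D) (by omega)
    exact ⟨c, hc, canForce_insert hcard hc h⟩

theorem canForce_opponent_of_not (hdet : ∀ c : Set B, (¬ ∃ f ∈ F, f ⊆ c) → ∃ t ∈ S, t ⊆ cᶜ)
    {k : ℕ} {t : Bool} {A D : Finset B} (hcard : #(A ∪ D) + k = Fintype.card B)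
    (h : ¬ CanForce F k t A D) : CanForce S k (!t) D A := by
  induction k generalizing t A D with
  | zero =>
    have hAD : A ∪ D = univ := eq_univ_of_card _ (by omega)
    obtain ⟨u, hu, huA⟩ := hdet A h
    refine ⟨u, hu, huA.trans fun x hx => ?_⟩
    have hxAD : x ∈ A ∪ D := hAD ▸ mem_univ x
    exact (mem_union.1 hxAD).resolve_left hx
  | succ k ih =>
    cases t with
    | true =>
      intro b hb
      have hb' : b ∉ A ∪ D := by rwa [union_comm]
      exact ih (by rw [insert_union, card_insert_of_notMem hb']; omega) fun hf => h ⟨b, hb', hf⟩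
    | false =>
      obtain ⟨b, hb, hnf⟩ := not_forall₂.mp h
      exact ⟨b, by rwa [union_comm], ih (by rw [union_insert, card_insert_of_notMem hb]; omega) hnf⟩

theorem canForce_empty_board (hdet : ∀ c : Set B, (¬ ∃ f ∈ F, f ⊆ c) → ∃ t ∈ S, t ⊆ cᶜ)
    {g : B ≃ B} (hg : ∀ t ∈ S, g '' t ∈ F) : CanForce F (Fintype.card B) true ∅ ∅ := by
  by_contra h
  have hS : CanForce S (Fintype.card B) false ∅ ∅ := canForce_opponent_of_not hdet (by simp) h
  have hF : CanForce F (Fintype.card B) false ∅ ∅ := by simpa using hS.image hg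
  exact h (canForce_true_of_false (by simp) hF)

end Forcing

section Strategy

variable [DecidableEq B]

def stonesAt (l : List B) (r : ℕ) : Finset B :=
  (univ.filter fun i : Fin l.length => (i : ℕ) % 2 = r).image l.get

def playStones (s : ℕ → B) (n r : ℕ) : Finset B :=
  ((range n).filter (· % 2 = r)).image s

theorem stonesAt_map_range (s : ℕ → B) (n r : ℕ) :
    stonesAt ((List.range n).map s) r = playStones s n r := by
  ext b
  simp only [stonesAt, playStones, mem_image, mem_filter, mem_univ, true_and, mem_range,
    List.get_eq_getElem, List.getElem_map, List.getElem_range]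
  constructor
  · rintro ⟨⟨i, hi⟩, hir, rfl⟩
    exact ⟨i, ⟨by simpa using hi, hir⟩, rfl⟩
  · rintro ⟨i, ⟨hi, hir⟩, rfl⟩
    exact ⟨⟨i, by simpa using hi⟩, hir, rfl⟩

theorem playStones_succ (s : ℕ → B) (n r : ℕ) :
    playStones s (n + 1) r =
      if n % 2 = r then insert (s n) (playStones s n r) else playStones s n r := by
  rw [playStones, range_add_one, filter_insert]
  split_ifs <;> simp [playStones]

theorem playStones_union (s : ℕ → B) (n : ℕ) :
    playStones s n 0 ∪ playStones s n 1 = (range n).image s := by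
  rw [playStones, playStones, ← image_union, ← filter_or, filter_true_of_mem fun i _ => by omega]

variable [Fintype B] (F : Set (Set B))

def IsForcingMove (l : List B) (b : B) : Prop :=
  CanForce F (Fintype.card B - (l.length + 1)) false (insert b (stonesAt l 0)) (stonesAt l 1)

noncomputable def forcingStrategy [Nonempty B] (l : List B) : B :=
  Classical.epsilon fun b => b ∉ l ∧ ((∃ c ∉ l, IsForcingMove F l c) → IsForcingMove F l b)

theorem isForcingMove_map_range (s : ℕ → B) (n : ℕ) (b : B) :
    IsForcingMove F ((List.range n).map s) b ↔
      CanForce F (Fintype.card B - (n + 1)) false (insert b (playStones s n 0))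
        (playStones s n 1) := by
  simp [IsForcingMove, stonesAt_map_range]

variable {F} [Nonempty B]

theorem forcingStrategy_spec {l : List B} (hl : ∃ b, b ∉ l) :
    forcingStrategy F l ∉ l ∧
      ((∃ c ∉ l, IsForcingMove F l c) → IsForcingMove F l (forcingStrategy F l)) := by
  refine Classical.epsilon_spec (p := fun b => b ∉ l ∧ _) ?_
  by_cases h : ∃ c ∉ l, IsForcingMove F l c
  · obtain ⟨c, hc, hcF⟩ := h
    exact ⟨c, hc, fun _ => hcF⟩
  · obtain ⟨b, hb⟩ := hl
    exact ⟨b, hb, fun h' => absurd h' h⟩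

theorem forcingStrategy_legal : LegalStrat (forcingStrategy F) :=
  fun _ hl => (forcingStrategy_spec hl).1

theorem canForce_playStones_succ {s : ℕ → B} (hs : ValidPlay s)
    (hσ : ConformsFirst (forcingStrategy F) s) {n : ℕ} (hn : n < Fintype.card B)
    (h : CanForce F (Fintype.card B - n) (n % 2 == 0) (playStones s n 0) (playStones s n 1)) :
    CanForce F (Fintype.card B - (n + 1)) ((n + 1) % 2 == 0) (playStones s (n + 1) 0)
      (playStones s (n + 1) 1) := by
  have hk : Fintype.card B - n = Fintype.card B - (n + 1) + 1 := by omega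
  have hfree : s n ∉ playStones s n 0 ∪ playStones s n 1 := by
    rw [playStones_union]
    simpa using fun i hi => hs.ne_of_lt hi hn
  rcases Nat.mod_two_eq_zero_or_one n with hpar | hpar
  · have hpar' : (n + 1) % 2 = 1 := by omega
    simp only [hk, hpar, hpar', playStones_succ] at h ⊢
    obtain ⟨b, hb, hbF⟩ := h
    have hb' : b ∉ (List.range n).map s := by simpa [playStones_union] using hb
    have hspec := forcingStrategy_spec (F := F) ⟨b, hb'⟩
    rw [← hσ n hpar, isForcingMove_map_range] at hspec
    exact hspec.2 ⟨b, hb', (isForcingMove_map_range F s n b).2 hbF⟩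
  · have hpar' : (n + 1) % 2 = 0 := by omega
    simp only [hk, hpar, hpar', playStones_succ] at h ⊢
    exact h (s n) hfree

theorem forcingStrategy_wins (hF : CanForce F (Fintype.card B) true ∅ ∅) {s : ℕ → B}
    (hs : ValidPlay s) (hσ : ConformsFirst (forcingStrategy F) s) :
    ∃ f ∈ F, f ⊆ FirstMoves s := by
  have hplay (n : ℕ) (hn : n ≤ Fintype.card B) :
      CanForce F (Fintype.card B - n) (n % 2 == 0) (playStones s n 0) (playStones s n 1) := by
    induction n with
    | zero => exact hF
    | succ n ih => exact canForce_playStones_succ hs hσ hn (ih (by omega))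
  obtain ⟨f, hf, hfs⟩ : ∃ f ∈ F, f ⊆ playStones s (Fintype.card B) 0 := by
    have h := hplay _ le_rfl
    rw [Nat.sub_self] at h
    exact h
  refine ⟨f, hf, hfs.trans ?_⟩
  intro b hb
  obtain ⟨i, hi, rfl⟩ := mem_image.1 hb
  rw [mem_filter, mem_range] at hi
  exact ⟨i, hi.2, rfl, fun j hj => hs.ne_of_lt hj hi.1⟩

end Strategy

theorem nonempty_of_xor_of_swap {F S : Set (Set B)}
    (hnotie : ∀ c : Set B, Xor (∃ f ∈ F, f ⊆ c) (∃ t ∈ S, t ⊆ cᶜ))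
    {g : B ≃ B} (hgS : ∀ t ∈ S, g '' t ∈ F) (hgF : ∀ f ∈ F, g '' f ∈ S) : Nonempty B := by
  by_contra hB
  rw [not_nonempty_iff] at hB
  rcases hnotie ∅ with ⟨⟨f, hf, -⟩, hS⟩ | ⟨⟨t, ht, -⟩, hF⟩
  · exact hS ⟨g '' f, hgF f hf, fun x _ => isEmptyElim x⟩
  · exact hF ⟨g '' t, hgS t ht, fun x _ => isEmptyElim x⟩

/-- Strategy-stealing for finite Hex: in a finite positional (stone-placing) game with
winning families `F` (first player) and `S` (second player), with no draws (every
complete colouring of the board produces exactly one winner) and admitting a board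
symmetry exchanging the players' sides (a bijection carrying `S` into `F` and `F` into
`S`), the second player has no winning strategy; consequently the first player has a
winning strategy. -/
theorem stmt11 (B : Type) [Fintype B] (F S : Set (Set B))
    (hnotie : ∀ cR : Set B, Xor' (∃ f ∈ F, f ⊆ cR) (∃ t ∈ S, t ⊆ cRᶜ))
    (g : B ≃ B) (hgS : ∀ t ∈ S, g '' t ∈ F) (hgF : ∀ f ∈ F, g '' f ∈ S) :
    (¬ ∃ τ : List B → B, LegalStrat τ ∧
        ∀ s : ℕ → B, ValidPlay s → ConformsSecond τ s → ∃ t ∈ S, t ⊆ SecondMoves s) ∧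
    (∃ σ : List B → B, LegalStrat σ ∧
        ∀ s : ℕ → B, ValidPlay s → ConformsFirst σ s → ∃ f ∈ F, f ⊆ FirstMoves s) := by
  classical
  have : Nonempty B := nonempty_of_xor_of_swap hnotie hgS hgF
  have hF : CanForce F (Fintype.card B) true ∅ ∅ :=
    canForce_empty_board (fun c => (Xor.or (hnotie c)).resolve_left) hgS
  refine ⟨?_, forcingStrategy F, forcingStrategy_legal, fun s => forcingStrategy_wins hF⟩
  rintro ⟨τ, hτ, hτwin⟩
  obtain ⟨s, hs, hσs, hτs⟩ := exists_validPlay_conforming (forcingStrategy_legal (F := F)) hτ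
  obtain ⟨f, hf, hfs⟩ := forcingStrategy_wins hF hs hσs
  obtain ⟨t, ht, hts⟩ := hτwin s hs hτs
  rcases hnotie (FirstMoves s) with ⟨-, hS⟩ | ⟨-, hF⟩
  · exact hS ⟨t, ht, hts.trans (disjoint_firstMoves_secondMoves s).subset_compl_left⟩
  · exact hF ⟨f, hf, hfs⟩
end

section
/- In the game of Infinite Hex, not both players can have winning paths in the same position: if a position contains a Red winning Z-chain then it contains no Blue winning Z-chain. -/
/-- A `Z`-chain for the player `red` in a position `c` of the Infinite Hex board
(tiles in bijection with `ℤ × ℤ`; `some true` = Red, `some false` = Blue): a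
bi-infinite sequence of tiles of that player's colour, consecutive ones hex-adjacent. -/
def IsZChain (c : ℤ × ℤ → Option Bool) (red : Bool) (r : ℤ → ℤ × ℤ) : Prop :=
  (∀ n : ℤ, c (r n) = some red) ∧ ∀ n : ℤ, hexAdj (r n) (r (n + 1))

/-- The chain `r` of player `red` is winning with respect to the reference tile `h₀`:
eventually its positive part lies in the appropriate quadrant (NE for Red, NW for Blue)
and its negative part lies in the opposite quadrant (SW for Red, SE for Blue). -/
def WinningWrt (red : Bool) (r : ℤ → ℤ × ℤ) (h₀ : ℤ × ℤ) : Prop :=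
  ∃ M : ℕ, ∀ m : ℕ, M ≤ m →
    (if red then
      (h₀.1 < (r m).1 ∧ h₀.2 < (r m).2) ∧
      ((r (-(m : ℤ))).1 < h₀.1 ∧ (r (-(m : ℤ))).2 < h₀.2)
    else
      ((r m).1 < h₀.1 ∧ h₀.2 < (r m).2) ∧
      (h₀.1 < (r (-(m : ℤ))).1 ∧ (r (-(m : ℤ))).2 < h₀.2))

/-- A chain is winning if it is winning with respect to every choice of reference tile. -/
def WinningZChain (c : ℤ × ℤ → Option Bool) (red : Bool) (r : ℤ → ℤ × ℤ) : Prop :=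
  IsZChain c red r ∧ ∀ h₀ : ℤ × ℤ, WinningWrt red r h₀

/-! For a tile `v` off the Red chain, count modulo 2 the Red steps that cross the horizontal ray
issued eastwards from just below `v`. As the Red chain runs from far south to far north, only
finitely many steps meet a given row, and this parity does not change between adjacent non-Red
tiles: the difference is the number of times the chain enters or leaves a half-row, which is even
because the chain eventually leaves every row. Far north-west of the chain the ray meets it an odd
number of times, far south-east not at all; a Blue winning chain would join two such tiles through
non-Red tiles. -/

open Filter Finset

theorem finsum_sub_eq_of_eventually_eq {G : Type*} [AddCommGroup G] {g : ℤ → G} {c d : G}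
    (htop : ∀ᶠ n in atTop, g n = c) (hbot : ∀ᶠ n in atBot, g n = d) :
    ∑ᶠ n, (g (n + 1) - g n) = c - d := by
  obtain ⟨N, hN⟩ : ∃ N : ℕ, ∀ n : ℤ, (N ≤ n → g n = c) ∧ (n ≤ -N → g n = d) := by
    obtain ⟨a, ha⟩ := eventually_atTop.1 htop
    obtain ⟨a', ha'⟩ := eventually_atBot.1 hbot
    exact ⟨max a.toNat (-a').toNat,
      fun n => ⟨fun hn => ha n (by omega), fun hn => ha' n (by omega)⟩⟩
  have hsupp : Function.support (fun n => g (n + 1) - g n) ⊆ Ico (-N : ℤ) N := by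
    intro n hn
    by_contra hout
    rw [coe_Ico, Set.mem_Ico, not_and_or, not_le, not_lt] at hout
    refine hn (sub_eq_zero.2 ?_)
    rcases hout with hlow | hhigh
    · rw [(hN _).2 (by omega), (hN _).2 (by omega)]
    · rw [(hN _).1 (by omega), (hN _).1 hhigh]
  have htel := sum_Ico_int_sub N g
  rw [(hN _).2 le_rfl, (hN _).1 le_rfl] at htel
  rw [finsum_eq_sum_of_support_subset _ hsupp, ← neg_sub d c, ← htel, ← sum_neg_distrib]
  simp only [neg_sub]

/-- The step `p → q` crosses the ray going east from the midpoint of the tile `v` and the tile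
`(v.1, v.2 - 1)` below it: in the planar embedding `(x, y) ↦ (x + y / 2, √3 y / 2)` of the board
the inequality says that the midpoint of the step does not lie west of the origin of the ray. -/
def CrossesRay (p q v : ℤ × ℤ) : Prop :=
  (p.2 = v.2 - 1 ∧ q.2 = v.2 ∨ p.2 = v.2 ∧ q.2 = v.2 - 1) ∧ 2 * v.1 ≤ p.1 + q.1

instance (p q v : ℤ × ℤ) : Decidable (CrossesRay p q v) := by
  unfold CrossesRay; infer_instance

noncomputable def rayParity (r : ℤ → ℤ × ℤ) (v : ℤ × ℤ) : ZMod 2 :=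
  ∑ᶠ n, if CrossesRay (r n) (r (n + 1)) v then 1 else 0

section Step

variable {p q : ℤ × ℤ} {a b : ℤ}

theorem crossesRay_iff_crossesRay_right (hpq : hexAdj p q) (hp : p ≠ (a, b)) (hq : q ≠ (a, b))
    (hp' : p ≠ (a + 1, b)) (hq' : q ≠ (a + 1, b)) :
    CrossesRay p q (a, b) ↔ CrossesRay p q (a + 1, b) := by
  obtain ⟨x, y⟩ := p
  obtain ⟨x', y'⟩ := q
  simp only [hexAdj, Set.mem_insert_iff, Set.mem_singleton_iff, Prod.mk.injEq, ne_eq,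
    CrossesRay] at *
  omega

/-- The two rays issued from `(a, b)` and from `(a', b - 1)`, together with the short segment
joining their origins, bound exactly the half-row `{(x, b - 1) | a' ≤ x}`. -/
theorem ite_crossesRay_sub_ite_crossesRay_down {a' : ℤ} (ha' : a' = a ∨ a' = a + 1)
    (hpq : hexAdj p q) (hp : p ≠ (a, b)) (hq : q ≠ (a, b)) (hp' : p ≠ (a', b - 1))
    (hq' : q ≠ (a', b - 1)) :
    ((if CrossesRay p q (a, b) then 1 else 0) - if CrossesRay p q (a', b - 1) then 1 else 0 :
        ZMod 2) =
      (if q.2 = b - 1 ∧ a' ≤ q.1 then 1 else 0) - if p.2 = b - 1 ∧ a' ≤ p.1 then 1 else 0 := by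
  obtain ⟨x, y⟩ := p
  obtain ⟨x', y'⟩ := q
  simp only [hexAdj, Set.mem_insert_iff, Set.mem_singleton_iff, Prod.mk.injEq, ne_eq] at *
  split_ifs <;> first | decide | (exfalso; simp only [CrossesRay] at *; omega)

theorem ite_crossesRay_eq_of_west (hpq : hexAdj p q) (hp : p.2 = b - 1 ∨ p.2 = b → a ≤ p.1)
    (hq : q.2 = b - 1 ∨ q.2 = b → a ≤ q.1) :
    (if CrossesRay p q (a, b) then 1 else 0 : ZMod 2) =
      (if b ≤ q.2 then 1 else 0) - if b ≤ p.2 then 1 else 0 := by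
  obtain ⟨x, y⟩ := p
  obtain ⟨x', y'⟩ := q
  simp only [hexAdj, Set.mem_insert_iff, Set.mem_singleton_iff, Prod.mk.injEq] at *
  split_ifs <;> first | decide | (exfalso; simp only [CrossesRay] at *; omega)

end Step

section Parity

variable {r : ℤ → ℤ × ℤ}

theorem rayParity_eq_zero_of_east {v : ℤ × ℤ}
    (heast : ∀ n, (r n).2 = v.2 - 1 ∨ (r n).2 = v.2 → (r n).1 < v.1) : rayParity r v = 0 := by
  refine finsum_eq_zero_of_forall_eq_zero fun n => if_neg ?_
  rintro ⟨hrows, hmid⟩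
  have := heast n
  have := heast (n + 1)
  omega

theorem rayParity_eq_of_right (hadj : ∀ n, hexAdj (r n) (r (n + 1))) {a b : ℤ}
    (hu : ∀ n, r n ≠ (a, b)) (hw : ∀ n, r n ≠ (a + 1, b)) :
    rayParity r (a, b) = rayParity r (a + 1, b) :=
  finsum_congr fun n =>
    if_congr (crossesRay_iff_crossesRay_right (hadj n) (hu n) (hu _) (hw n) (hw _)) rfl rfl

variable (hN : Tendsto (fun n => (r n).2) atTop atTop)
  (hS : Tendsto (fun n => (r n).2) atBot atBot)
include hN hS

theorem hasFiniteSupport_crossesRay (v : ℤ × ℤ) :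
    Function.HasFiniteSupport fun n =>
      if CrossesRay (r n) (r (n + 1)) v then (1 : ZMod 2) else 0 := by
  obtain ⟨N₁, hN₁⟩ := eventually_atTop.1 (hN.eventually_gt_atTop v.2)
  obtain ⟨N₂, hN₂⟩ := eventually_atBot.1 (hS.eventually_lt_atBot (v.2 - 1))
  refine (Set.finite_Icc N₂ N₁).subset fun n hn => ?_
  have hcross : CrossesRay (r n) (r (n + 1)) v := by
    by_contra h
    exact hn (if_neg h)
  have h₁ := mt (hN₁ n)
  have h₂ := mt (hN₂ n)
  simp only [CrossesRay] at hcross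
  constructor <;> omega

variable (hadj : ∀ n, hexAdj (r n) (r (n + 1)))
include hadj

theorem rayParity_eq_of_down {a a' b : ℤ} (ha' : a' = a ∨ a' = a + 1) (hu : ∀ n, r n ≠ (a, b))
    (hw : ∀ n, r n ≠ (a', b - 1)) : rayParity r (a, b) = rayParity r (a', b - 1) := by
  rw [← sub_eq_zero, rayParity, rayParity, ← finsum_sub_distrib
    (hasFiniteSupport_crossesRay hN hS _) (hasFiniteSupport_crossesRay hN hS _)]
  simp_rw [ite_crossesRay_sub_ite_crossesRay_down ha' (hadj _) (hu _) (hu _) (hw _) (hw _)]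
  rw [finsum_sub_eq_of_eventually_eq
    (g := fun n => if (r n).2 = b - 1 ∧ a' ≤ (r n).1 then (1 : ZMod 2) else 0) (c := 0) (d := 0)
    ?_ ?_, sub_zero]
  · exact (hN.eventually_gt_atTop (b - 1)).mono fun n hn => if_neg fun h => hn.ne' h.1
  · exact (hS.eventually_lt_atBot (b - 1)).mono fun n hn => if_neg fun h => hn.ne h.1

theorem rayParity_eq_of_hexAdj {u v : ℤ × ℤ} (huv : hexAdj u v) (hu : ∀ n, r n ≠ u)
    (hv : ∀ n, r n ≠ v) : rayParity r u = rayParity r v := by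
  obtain ⟨a, b⟩ := u
  obtain ⟨c, d⟩ := v
  simp only [hexAdj, Set.mem_insert_iff, Set.mem_singleton_iff, Prod.mk.injEq] at huv
  rcases huv with ⟨h₁, h₂⟩ | ⟨h₁, h₂⟩ | ⟨h₁, h₂⟩ | ⟨h₁, h₂⟩ | ⟨h₁, h₂⟩ | ⟨h₁, h₂⟩
  · obtain ⟨rfl, rfl⟩ : a = c + 1 ∧ b = d := by omega
    exact (rayParity_eq_of_right hadj hv hu).symm
  · obtain ⟨rfl, rfl⟩ : c = a + 1 ∧ d = b := by omega
    exact rayParity_eq_of_right hadj hu hv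
  · obtain ⟨rfl, rfl⟩ : c = a ∧ d = b - 1 := by omega
    exact rayParity_eq_of_down hN hS hadj (Or.inl rfl) hu hv
  · obtain ⟨rfl, rfl⟩ : a = c ∧ b = d - 1 := by omega
    exact (rayParity_eq_of_down hN hS hadj (Or.inl rfl) hv hu).symm
  · obtain ⟨rfl, rfl⟩ : a = c + 1 ∧ b = d - 1 := by omega
    exact (rayParity_eq_of_down hN hS hadj (Or.inr rfl) hv hu).symm
  · obtain ⟨rfl, rfl⟩ : c = a + 1 ∧ d = b - 1 := by omega
    exact rayParity_eq_of_down hN hS hadj (Or.inr rfl) hu hv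

theorem rayParity_eq_one_of_west {v : ℤ × ℤ}
    (hwest : ∀ n, (r n).2 = v.2 - 1 ∨ (r n).2 = v.2 → v.1 ≤ (r n).1) : rayParity r v = 1 := by
  obtain ⟨a, b⟩ := v
  rw [rayParity,
    finsum_congr fun n => ite_crossesRay_eq_of_west (hadj n) (hwest n) (hwest (n + 1)),
    finsum_sub_eq_of_eventually_eq (g := fun n => if b ≤ (r n).2 then (1 : ZMod 2) else 0)
      (c := 1) (d := 0) ?_ ?_, sub_zero]
  · exact (hN.eventually_ge_atTop b).mono fun n hn => if_pos hn
  · exact (hS.eventually_lt_atBot b).mono fun n hn => if_neg hn.not_ge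

end Parity

theorem eventually_atTop_and_atBot_of_nat {P Q : ℤ → Prop}
    (h : ∃ M : ℕ, ∀ m : ℕ, M ≤ m → P m ∧ Q (-(m : ℤ))) :
    (∀ᶠ n in atTop, P n) ∧ ∀ᶠ n in atBot, Q n := by
  obtain ⟨M, hM⟩ := h
  refine ⟨eventually_atTop.2 ⟨M, fun n hn => ?_⟩, eventually_atBot.2 ⟨-M, fun n hn => ?_⟩⟩
  · simpa [Int.toNat_of_nonneg (by omega : 0 ≤ n)] using (hM n.toNat (by omega)).1
  · simpa [Int.toNat_of_nonneg (by omega : 0 ≤ -n)] using (hM (-n).toNat (by omega)).2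

theorem WinningWrt.eventually_of_red {r : ℤ → ℤ × ℤ} {h₀ : ℤ × ℤ} (h : WinningWrt true r h₀) :
    (∀ᶠ n in atTop, h₀.1 < (r n).1 ∧ h₀.2 < (r n).2) ∧
      ∀ᶠ n in atBot, (r n).1 < h₀.1 ∧ (r n).2 < h₀.2 :=
  eventually_atTop_and_atBot_of_nat (by simpa [WinningWrt] using h)

theorem WinningWrt.eventually_of_blue {b : ℤ → ℤ × ℤ} {h₀ : ℤ × ℤ}
    (h : WinningWrt false b h₀) :
    (∀ᶠ n in atTop, (b n).1 < h₀.1 ∧ h₀.2 < (b n).2) ∧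
      ∀ᶠ n in atBot, h₀.1 < (b n).1 ∧ (b n).2 < h₀.2 :=
  eventually_atTop_and_atBot_of_nat (by simpa [WinningWrt] using h)

theorem exists_sign_fst_of_far_snd {r : ℤ → ℤ × ℤ}
    (htop : ∀ᶠ n in atTop, 0 < (r n).1 ∧ 0 < (r n).2)
    (hbot : ∀ᶠ n in atBot, (r n).1 < 0 ∧ (r n).2 < 0) :
    ∃ K : ℤ, ∀ n, (K < (r n).2 → 0 < (r n).1) ∧ ((r n).2 < -K → (r n).1 < 0) := by
  obtain ⟨N₁, hN₁⟩ := eventually_atTop.1 htop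
  obtain ⟨N₂, hN₂⟩ := eventually_atBot.1 hbot
  obtain ⟨B, hB⟩ := ((Icc N₂ N₁).image fun n => |(r n).2|).bddAbove
  refine ⟨max B 0, fun n => ?_⟩
  by_cases h₁ : N₁ ≤ n
  · have := hN₁ n h₁
    omega
  by_cases h₂ : n ≤ N₂
  · have := hN₂ n h₂
    omega
  have : |(r n).2| ≤ B := hB (mem_coe.2 (mem_image_of_mem _ (mem_Icc.2 ⟨by omega, by omega⟩)))
  rw [abs_le] at this
  omega

/-- In Infinite Hex not both players can have winning paths in the same position:
if a position contains a Red winning `Z`-chain then it contains no Blue winning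
`Z`-chain. -/
theorem stmt12 (c : ℤ × ℤ → Option Bool) (r : ℤ → ℤ × ℤ)
    (hr : WinningZChain c true r) :
    ¬ ∃ b : ℤ → ℤ × ℤ, WinningZChain c false b := by
  rintro ⟨b, ⟨hbcol, hbadj⟩, hbwin⟩
  obtain ⟨⟨hrcol, hradj⟩, hrwin⟩ := hr
  have hN : Tendsto (fun n => (r n).2) atTop atTop := tendsto_atTop.2 fun K =>
    (hrwin (0, K)).eventually_of_red.1.mono fun n hn => hn.2.le
  have hS : Tendsto (fun n => (r n).2) atBot atBot := tendsto_atBot.2 fun K =>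
    (hrwin (0, K)).eventually_of_red.2.mono fun n hn => hn.2.le
  have hoff : ∀ m n, r n ≠ b m := fun m n h => by simpa [h, hbcol] using hrcol n
  have hconst : ∀ m, rayParity r (b m) = rayParity r (b 0) := by
    have hper : Function.Periodic (fun m => rayParity r (b m)) 1 := fun m =>
      (rayParity_eq_of_hexAdj hN hS hradj (hbadj m) (hoff m) (hoff (m + 1))).symm
    exact fun m => by simpa using hper.int_mul_eq m
  obtain ⟨K, hK⟩ := exists_sign_fst_of_far_snd (hrwin (0, 0)).eventually_of_red.1
    (hrwin (0, 0)).eventually_of_red.2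
  obtain ⟨m, hm⟩ := (hbwin (0, K + 1)).eventually_of_blue.1.exists
  obtain ⟨m', hm'⟩ := (hbwin (0, -K - 1)).eventually_of_blue.2.exists
  have hone : rayParity r (b m) = 1 := rayParity_eq_one_of_west hN hS hradj fun n hn => by
    have := hK n
    omega
  have hzero : rayParity r (b m') = 0 := rayParity_eq_zero_of_east fun n hn => by
    have := hK n
    omega
  exact zero_ne_one (hzero.symm.trans ((hconst m').trans ((hconst m).symm.trans hone)))
end

section
/- Let G be a Maker-Breaker game on a hypergraph (B, F) that is open for Breaker, with Maker moving first. If Breaker has a winning strategy (a strategy guaranteeing Breaker marks at least one vertex of every set in F, each at a finite stage), then the hypergraph (B, F) is properly 2-colourable: B can be 2-coloured so that no hyperedge in F is monochromatic. -/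
variable {B : Type}

open Classical in
noncomputable def MBfresh (b0 : B) (l : List B) : B :=
  if h : ∃ x, x ∉ l then h.choose else b0

lemma MBfresh_spec (b0 : B) (l : List B) (h : ∃ x, x ∉ l) : MBfresh b0 l ∉ l := by
  rw [MBfresh, dif_pos h]; exact h.choose_spec

open Classical in
noncomputable def MBa (τ : List B → B) (b0 : B) (p : List B × List B) : B :=
  if τ p.2 ∈ p.1 then MBfresh b0 p.1 else τ p.2

open Classical in
noncomputable def MBb (τ : List B → B) (b0 : B) (p : List B × List B) : B :=
  if τ (p.1 ++ [MBa τ b0 p]) ∈ p.2 ++ [τ p.2] then MBfresh b0 (p.2 ++ [τ p.2])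
  else τ (p.1 ++ [MBa τ b0 p])

noncomputable def MBstep (τ : List B → B) (b0 : B) (p : List B × List B) : List B × List B :=
  (p.1 ++ [MBa τ b0 p, τ (p.1 ++ [MBa τ b0 p])], p.2 ++ [τ p.2, MBb τ b0 p])

noncomputable def MBP (τ : List B → B) (b0 : B) : ℕ → List B × List B
  | 0 => ([], [b0])
  | k + 1 => MBstep τ b0 (MBP τ b0 k)

lemma MBP_len1 (τ : List B → B) (b0 : B) (k : ℕ) : (MBP τ b0 k).1.length = 2 * k := by
  induction k with
  | zero => simp [MBP]
  | succ k ih => simp [MBP, MBstep, ih]; omega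

lemma MBP_len2 (τ : List B → B) (b0 : B) (k : ℕ) : (MBP τ b0 k).2.length = 2 * k + 1 := by
  induction k with
  | zero => simp [MBP]
  | succ k ih => simp [MBP, MBstep, ih]; omega

lemma MBP_prefix1 (τ : List B → B) (b0 : B) {j k : ℕ} (h : j ≤ k) :
    (MBP τ b0 j).1 <+: (MBP τ b0 k).1 := by
  induction k with
  | zero => simp_all
  | succ k ih =>
    rcases Nat.lt_or_ge j (k+1) with h' | h'
    · exact (ih (by omega)).trans ⟨_, rfl⟩
    · have : j = k + 1 := by omega
      subst this; exact List.prefix_refl _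

lemma MBP_prefix2 (τ : List B → B) (b0 : B) {j k : ℕ} (h : j ≤ k) :
    (MBP τ b0 j).2 <+: (MBP τ b0 k).2 := by
  induction k with
  | zero => simp_all
  | succ k ih =>
    rcases Nat.lt_or_ge j (k+1) with h' | h'
    · exact (ih (by omega)).trans ⟨_, rfl⟩
    · have : j = k + 1 := by omega
      subst this; exact List.prefix_refl _

lemma MBgetD_prefix {l l' : List B} (h : l <+: l') {n : ℕ} (hn : n < l.length) (d : B) :
    l'.getD n d = l.getD n d := by
  obtain ⟨t, rfl⟩ := h; exact List.getD_append l t d n hn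

noncomputable def MBs (τ : List B → B) (b0 : B) (n : ℕ) : B := (MBP τ b0 (n + 1)).1.getD n b0

noncomputable def MBv (τ : List B → B) (b0 : B) (n : ℕ) : B := (MBP τ b0 (n + 1)).2.getD n b0

lemma MBs_eq (τ : List B → B) (b0 : B) {n k : ℕ} (h : n < 2 * k) :
    MBs τ b0 n = (MBP τ b0 k).1.getD n b0 := by
  rcases Nat.le_total (n + 1) k with h' | h'
  · rw [MBs, MBgetD_prefix (MBP_prefix1 τ b0 h') (by rw [MBP_len1]; omega)]
  · rw [MBs, MBgetD_prefix (MBP_prefix1 τ b0 h') (by rw [MBP_len1]; omega)]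

lemma MBv_eq (τ : List B → B) (b0 : B) {n k : ℕ} (h : n < 2 * k + 1) :
    MBv τ b0 n = (MBP τ b0 k).2.getD n b0 := by
  rcases Nat.le_total (n + 1) k with h' | h'
  · rw [MBv, MBgetD_prefix (MBP_prefix2 τ b0 h') (by rw [MBP_len2]; omega)]
  · rw [MBv, MBgetD_prefix (MBP_prefix2 τ b0 h') (by rw [MBP_len2]; omega)]

lemma MBs_even (τ : List B → B) (b0 : B) (k : ℕ) :
    MBs τ b0 (2 * k) = MBa τ b0 (MBP τ b0 k) := by
  rw [MBs_eq τ b0 (show 2 * k < 2 * (k + 1) by omega)]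
  show (MBstep τ b0 (MBP τ b0 k)).1.getD (2 * k) b0 = _
  rw [MBstep, List.getD_append_right _ _ _ _ (by rw [MBP_len1]), MBP_len1]
  simp

lemma MBs_odd (τ : List B → B) (b0 : B) (k : ℕ) :
    MBs τ b0 (2 * k + 1) = τ ((MBP τ b0 k).1 ++ [MBa τ b0 (MBP τ b0 k)]) := by
  rw [MBs_eq τ b0 (show 2 * k + 1 < 2 * (k + 1) by omega)]
  show (MBstep τ b0 (MBP τ b0 k)).1.getD (2 * k + 1) b0 = _
  rw [MBstep, List.getD_append_right _ _ _ _ (by rw [MBP_len1]; omega), MBP_len1]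
  simp

lemma MBv_zero (τ : List B → B) (b0 : B) : MBv τ b0 0 = b0 := by
  rw [MBv_eq τ b0 (show 0 < 2 * 0 + 1 by omega)]; rfl

lemma MBv_odd (τ : List B → B) (b0 : B) (k : ℕ) :
    MBv τ b0 (2 * k + 1) = τ (MBP τ b0 k).2 := by
  rw [MBv_eq τ b0 (show 2 * k + 1 < 2 * (k + 1) + 1 by omega)]
  show (MBstep τ b0 (MBP τ b0 k)).2.getD (2 * k + 1) b0 = _
  rw [MBstep, List.getD_append_right _ _ _ _ (by rw [MBP_len2]), MBP_len2]
  simp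

lemma MBv_even (τ : List B → B) (b0 : B) (k : ℕ) :
    MBv τ b0 (2 * k + 2) = MBb τ b0 (MBP τ b0 k) := by
  rw [MBv_eq τ b0 (show 2 * k + 2 < 2 * (k + 1) + 1 by omega)]
  show (MBstep τ b0 (MBP τ b0 k)).2.getD (2 * k + 2) b0 = _
  rw [MBstep, List.getD_append_right _ _ _ _ (by rw [MBP_len2]; omega), MBP_len2]
  simp

lemma MBs_map (τ : List B → B) (b0 : B) (k : ℕ) :
    (List.range (2 * k)).map (MBs τ b0) = (MBP τ b0 k).1 := by
  induction k with
  | zero => simp [MBP]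
  | succ k ih =>
    have h : 2 * (k + 1) = (2 * k + 1) + 1 := by omega
    rw [h, List.range_succ, List.range_succ, List.map_append, List.map_append, ih]
    show _ = (MBstep τ b0 (MBP τ b0 k)).1
    rw [MBstep]
    simp [MBs_even, MBs_odd]

lemma MBv_map (τ : List B → B) (b0 : B) (k : ℕ) :
    (List.range (2 * k + 1)).map (MBv τ b0) = (MBP τ b0 k).2 := by
  induction k with
  | zero => simp [MBP, List.range_succ, MBv_zero]
  | succ k ih =>
    have h : 2 * (k + 1) + 1 = ((2 * k + 1) + 1) + 1 := by omega
    rw [h, List.range_succ, List.range_succ, List.map_append, List.map_append, ih]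
    show _ = (MBstep τ b0 (MBP τ b0 k)).2
    rw [MBstep]
    have h2 : 2 * k + 1 + 1 = 2 * k + 2 := by omega
    simp [MBv_odd, h2, MBv_even]

lemma MBmem_map_range {s : ℕ → B} {n : ℕ} {b : B} :
    b ∈ (List.range n).map s ↔ ∃ m < n, s m = b := by simp

lemma MBinv (τ : List B → B) (b0 : B) (hτ : LegalStrat τ) (k : ℕ) :
    ∀ x ∈ (MBP τ b0 k).1, x ∈ (MBP τ b0 k).2 := by
  induction k with
  | zero => simp [MBP]
  | succ k ih =>
    intro x hx
    show x ∈ (MBstep τ b0 (MBP τ b0 k)).2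
    have hx' : x ∈ (MBstep τ b0 (MBP τ b0 k)).1 := hx
    rw [MBstep] at hx' ⊢
    simp only [List.mem_append, List.mem_cons, List.not_mem_nil, or_false] at hx' ⊢
    rcases hx' with h | h | h
    · exact Or.inl (ih x h)
    · -- x = MBa
      subst h
      rw [MBa]
      split_ifs with hc
      · -- τ V ∈ H, so τ V ∈ V, so no fresh vertex outside V, so everything is in V
        left
        by_contra hnot
        have hex : ∃ y, y ∉ (MBP τ b0 k).2 := ⟨_, hnot⟩
        exact hτ _ hex (ih _ hc)
      · right; left; rfl
    · -- x = τ (H ++ [a])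
      subst h
      rw [MBb]
      split_ifs with hc
      · simp only [List.mem_append, List.mem_cons, List.not_mem_nil, or_false] at hc
        rcases hc with h | h
        · left; exact h
        · right; left; exact h
      · right; right; rfl

lemma MBvalidS (τ : List B → B) (b0 : B) (hτ : LegalStrat τ) : ValidPlay (MBs τ b0) := by
  intro n hex m hm
  have hb : ∃ b, b ∉ (List.range n).map (MBs τ b0) := by
    obtain ⟨b, hb⟩ := hex
    exact ⟨b, fun h => by obtain ⟨m', hm', rfl⟩ := MBmem_map_range.mp h; exact hb m' hm' rfl⟩
  have hmem : MBs τ b0 m ∈ (List.range n).map (MBs τ b0) :=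
    MBmem_map_range.mpr ⟨m, hm, rfl⟩
  rcases Nat.even_or_odd n with ⟨k, hk⟩ | ⟨k, hk⟩
  · -- n = 2k
    have hn : n = 2 * k := by omega
    subst hn
    rw [MBs_even]
    rw [MBs_map] at hb hmem
    rw [MBa]
    split_ifs with hc
    · exact fun h => MBfresh_spec b0 _ hb (h ▸ hmem)
    · exact fun h => hc (h ▸ hmem)
  · -- n = 2k+1
    have hn : n = 2 * k + 1 := by omega
    subst hn
    rw [MBs_odd]
    have hmap : (List.range (2 * k + 1)).map (MBs τ b0)
        = (MBP τ b0 k).1 ++ [MBa τ b0 (MBP τ b0 k)] := by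
      rw [List.range_succ, List.map_append, MBs_map]
      simp [MBs_even]
    rw [hmap] at hb hmem
    exact fun h => hτ _ hb (h ▸ hmem)

lemma MBvalidV (τ : List B → B) (b0 : B) (hτ : LegalStrat τ) : ValidPlay (MBv τ b0) := by
  intro n hex m hm
  have hb : ∃ b, b ∉ (List.range n).map (MBv τ b0) := by
    obtain ⟨b, hb⟩ := hex
    exact ⟨b, fun h => by obtain ⟨m', hm', rfl⟩ := MBmem_map_range.mp h; exact hb m' hm' rfl⟩
  have hmem : MBv τ b0 m ∈ (List.range n).map (MBv τ b0) :=
    MBmem_map_range.mpr ⟨m, hm, rfl⟩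
  rcases Nat.even_or_odd n with ⟨k, hk⟩ | ⟨k, hk⟩
  · -- n = 2k even; n = 0 impossible since m < n
    rcases Nat.eq_zero_or_pos k with rfl | hk0
    · omega
    · have hn : n = 2 * (k - 1) + 2 := by omega
      subst hn
      rw [MBv_even]
      have hmap : (List.range (2 * (k - 1) + 2)).map (MBv τ b0)
          = (MBP τ b0 (k - 1)).2 ++ [τ (MBP τ b0 (k - 1)).2] := by
        have h2 : 2 * (k - 1) + 2 = (2 * (k - 1) + 1) + 1 := by omega
        rw [h2, List.range_succ, List.map_append, MBv_map]
        simp [MBv_odd]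
      rw [hmap] at hb hmem
      rw [MBb]
      split_ifs with hc
      · exact fun h => MBfresh_spec b0 _ hb (h ▸ hmem)
      · exact fun h => hc (h ▸ hmem)
  · have hn : n = 2 * k + 1 := by omega
    subst hn
    rw [MBv_odd]
    rw [MBv_map] at hb hmem
    exact fun h => hτ _ hb (h ▸ hmem)

lemma MBconfS (τ : List B → B) (b0 : B) : ConformsSecond τ (MBs τ b0) := by
  intro n hn
  have hk : n = 2 * (n / 2) + 1 := by omega
  rw [hk, MBs_odd]
  congr 1
  rw [List.range_succ, List.map_append, MBs_map]
  simp [MBs_even]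

lemma MBconfV (τ : List B → B) (b0 : B) : ConformsSecond τ (MBv τ b0) := by
  intro n hn
  have hk : n = 2 * (n / 2) + 1 := by omega
  rw [hk, MBv_odd]
  congr 1
  exact (MBv_map τ b0 (n / 2)).symm

lemma MBsubset (τ : List B → B) (b0 : B) (hτ : LegalStrat τ) :
    SecondMoves (MBv τ b0) ⊆ FirstMoves (MBs τ b0) := by
  rintro b ⟨i, hi1, hi2, hi3⟩
  have hk : i = 2 * (i / 2) + 1 := by omega
  set k := i / 2 with hkdef
  rw [hk, MBv_odd] at hi2
  have hbV : b ∉ (MBP τ b0 k).2 := by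
    rw [← MBv_map]
    intro h
    obtain ⟨m', hm', h'⟩ := MBmem_map_range.mp h
    exact hi3 m' (by omega) h'
  have hbH : b ∉ (MBP τ b0 k).1 := fun h => hbV (MBinv τ b0 hτ k b h)
  refine ⟨2 * k, by omega, ?_, ?_⟩
  · rw [MBs_even, MBa, if_neg (by rw [hi2]; exact hbH), hi2]
  · intro j hj h
    apply hbH
    rw [← MBs_map]
    exact h ▸ MBmem_map_range.mpr ⟨j, hj, rfl⟩

lemma MBdisj (s : ℕ → B) : ∀ b, b ∈ FirstMoves s → b ∉ SecondMoves s := by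
  rintro b ⟨i, hi1, hi2, hi3⟩ ⟨j, hj1, hj2, hj3⟩
  rcases Nat.lt_trichotomy i j with h | h | h
  · exact hj3 i h hi2
  · omega
  · exact hi3 j h hj2

/-- If, in a Maker-Breaker game on a hypergraph `(B, F)` which is open for Breaker
(the family of transversals of `F` has a basis of finite sets), with Maker moving
first, Breaker (the second player) has a winning strategy — a legal strategy
guaranteeing that in every conforming valid play Breaker marks at least one vertex of
every hyperedge in `F` — then `(B, F)` is properly 2-colourable: the vertices can be
2-coloured so that no hyperedge of `F` is monochromatic. -/
theorem stmt15 (B : Type) (F : Set (Set B)) (hne : ∅ ∉ F)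
    (hopen : ∀ t : Set B, (∀ f ∈ F, (t ∩ f).Nonempty) →
        ∃ t' ⊆ t, t'.Finite ∧ ∀ f ∈ F, (t' ∩ f).Nonempty)
    (τ : List B → B) (hτ : LegalStrat τ)
    (hwin : ∀ s : ℕ → B, ValidPlay s → ConformsSecond τ s →
        ∀ f ∈ F, (f ∩ SecondMoves s).Nonempty) :
    ∃ c : B → Bool, ∀ f ∈ F, (∃ a ∈ f, c a = true) ∧ (∃ a ∈ f, c a = false) := by
  classical
  by_cases hB : Nonempty B
  · obtain ⟨b0⟩ := hB
    set s := MBs τ b0 with hs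
    set v := MBv τ b0 with hv
    refine ⟨fun x => if x ∈ FirstMoves s then true else false, fun f hf => ?_⟩
    constructor
    · obtain ⟨a, haf, hav⟩ := hwin v (MBvalidV τ b0 hτ) (MBconfV τ b0) f hf
      exact ⟨a, haf, if_pos (MBsubset τ b0 hτ hav)⟩
    · obtain ⟨a, haf, has⟩ := hwin s (MBvalidS τ b0 hτ) (MBconfS τ b0) f hf
      refine ⟨a, haf, if_neg fun h => ?_⟩
      exact MBdisj s a h has
  · refine ⟨fun _ => true, fun f hf => absurd hf ?_⟩
    have : f = ∅ := Set.eq_empty_of_forall_notMem fun x _ => hB ⟨x⟩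
    rw [this]; exact hne
end

section
/- (Strategy-stealing for stone-placing games) Let G be a stone-placing game on (B, F, S) that is strictly not open for both players (every winning set in F and in S is infinite). Suppose there is a fixed-point-free involution g of B such that for every s ∈ S there exists f ∈ F with f ⊆ g[s]. Then the second player has no winning strategy. -/
variable {B : Type}

section SSAux

variable {B : Type} [Nonempty B]

attribute [local instance] Classical.propDecidable

noncomputable def SSfresh (l : List B) : B :=
  if h : ∃ b : B, b ∉ l then h.choose else Classical.arbitrary B

lemma SSfresh_spec {l : List B} (h : ∃ b : B, b ∉ l) : SSfresh l ∉ l := by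
  rw [SSfresh, dif_pos h]; exact h.choose_spec

noncomputable def SSmove (τ : List B → B) (g : B → B) (n : ℕ) (l : List B) : B :=
  if n % 2 = 1 then τ l
  else match l.getLast? with
    | none => SSfresh l
    | some b => if g b ∉ l then g b else SSfresh l

noncomputable def SShist (τ : List B → B) (g : B → B) : ℕ → List B
  | 0 => []
  | n + 1 => SShist τ g n ++ [SSmove τ g n (SShist τ g n)]

noncomputable def SSplay (τ : List B → B) (g : B → B) (n : ℕ) : B :=
  SSmove τ g n (SShist τ g n)

lemma SShist_eq (τ : List B → B) (g : B → B) (n : ℕ) :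
    SShist τ g n = (List.range n).map (SSplay τ g) := by
  induction n with
  | zero => rfl
  | succ n ih =>
    rw [SShist, ih, List.range_succ, List.map_append, List.map_cons, List.map_nil,
      SSplay, ih]

lemma mem_SShist {τ : List B → B} {g : B → B} {n : ℕ} {b : B} :
    b ∈ SShist τ g n ↔ ∃ m < n, SSplay τ g m = b := by
  rw [SShist_eq]; simp

lemma SSplay_odd (τ : List B → B) (g : B → B) {n : ℕ} (hn : n % 2 = 1) :
    SSplay τ g n = τ (SShist τ g n) := by
  rw [SSplay, SSmove, if_pos hn]

lemma SSplay_succ_even (τ : List B → B) (g : B → B) {n : ℕ} (hn : (n + 1) % 2 = 0) :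
    SSplay τ g (n + 1) =
      if g (SSplay τ g n) ∉ SShist τ g (n + 1) then g (SSplay τ g n)
      else SSfresh (SShist τ g (n + 1)) := by
  rw [SSplay, SSmove, if_neg (by omega)]
  have h : (SShist τ g (n + 1)).getLast? = some (SSplay τ g n) := by
    rw [show SShist τ g (n + 1) = SShist τ g n ++ [SSplay τ g n] from rfl]
    simp
  rw [h]

lemma SSvalid (τ : List B → B) (g : B → B) (hleg : LegalStrat τ) :
    ValidPlay (SSplay τ g) := by
  intro n hex m hm
  have hex' : ∃ b : B, b ∉ SShist τ g n := by
    obtain ⟨b, hb⟩ := hex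
    exact ⟨b, fun hmem => by
      obtain ⟨k, hk, hkb⟩ := mem_SShist.mp hmem; exact hb k hk hkb⟩
  have hnot : SSplay τ g n ∉ SShist τ g n := by
    rcases Nat.mod_two_eq_zero_or_one n with h2 | h2
    · match n, h2 with
      | 0, _ => simp [SShist]
      | (k + 1), h2 =>
        rw [SSplay_succ_even τ g h2]
        split
        · assumption
        · exact SSfresh_spec hex'
    · rw [SSplay_odd τ g h2]
      exact hleg _ hex'
  exact fun h => hnot (mem_SShist.mpr ⟨m, hm, h⟩)

lemma SSkey {τ : List B → B} {g : B → B}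
    (hinv : ∀ b : B, g (g b) = b) (hfpf : ∀ b : B, g b ≠ b) {b : B}
    (hb : b ∈ SecondMoves (SSplay τ g)) : g b ∈ FirstMoves (SSplay τ g) := by
  obtain ⟨n, hn, hsn, hprev⟩ := hb
  by_cases hgb : ∃ m, SSplay τ g m = g b ∧ m ≤ n
  · have hgb' : ∃ m, SSplay τ g m = g b := ⟨hgb.choose, hgb.choose_spec.1⟩
    set m0 := Nat.find hgb' with hm0
    have hm0spec : SSplay τ g m0 = g b := Nat.find_spec hgb'
    have hm0min : ∀ j < m0, SSplay τ g j ≠ g b := fun j hj => Nat.find_min hgb' hj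
    have hm0le : m0 ≤ n :=
      le_trans (Nat.find_le hgb.choose_spec.1) hgb.choose_spec.2
    rcases Nat.mod_two_eq_zero_or_one m0 with h2 | h2
    · exact ⟨m0, h2, hm0spec, hm0min⟩
    · exfalso
      have hm0ne : m0 ≠ n := by
        intro h
        exact hfpf b ((h ▸ hm0spec).symm.trans hsn)
      have hlt : m0 + 1 < n := by omega
      have hbmem : b ∉ SShist τ g (m0 + 1) := by
        intro hmem
        obtain ⟨k, hk, hkb⟩ := mem_SShist.mp hmem
        exact hprev k (by omega) hkb
      have : SSplay τ g (m0 + 1) = b := by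
        rw [SSplay_succ_even τ g (by omega), hm0spec, hinv, if_pos hbmem]
      exact hprev (m0 + 1) hlt this
  · push_neg at hgb
    have hmem : g b ∉ SShist τ g (n + 1) := by
      intro hmem
      obtain ⟨k, hk, hkb⟩ := mem_SShist.mp hmem
      exact absurd (hgb k hkb) (by omega)
    have hplay : SSplay τ g (n + 1) = g b := by
      rw [SSplay_succ_even τ g (by omega), hsn, if_pos hmem]
    exact ⟨n + 1, by omega, hplay, fun j hj hjb =>
      hmem (mem_SShist.mpr ⟨j, hj, hjb⟩)⟩

end SSAux

/-- Strategy-stealing for stone-placing games: let a stone-placing game on `(B, F, S)`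
be strictly not open for both players (every winning set in `F` and in `S` is
infinite), and suppose there is a fixed-point-free involution `g` of `B` such that for
every `s ∈ S` there is `f ∈ F` with `f ⊆ g[s]`.  Then the second player has no winning
strategy (no legal strategy of hers guarantees, in every conforming valid play, that
she completes a set of `S` while the first player completes no set of `F`). -/
theorem stmt19 (B : Type) (F S : Set (Set B))
    (hF : ∀ f ∈ F, f.Infinite) (hS : ∀ t ∈ S, t.Infinite)
    (g : B → B) (hinv : ∀ b : B, g (g b) = b) (hfpf : ∀ b : B, g b ≠ b)
    (hsym : ∀ t ∈ S, ∃ f ∈ F, f ⊆ g '' t) :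
    ¬ ∃ τ : List B → B, LegalStrat τ ∧
        ∀ s : ℕ → B, ValidPlay s → ConformsSecond τ s →
          (∃ t ∈ S, t ⊆ SecondMoves s) ∧ ¬ ∃ f ∈ F, f ⊆ FirstMoves s := by
  rintro ⟨τ, hleg, hwin⟩
  haveI : Nonempty B := ⟨τ []⟩
  have hvalid := SSvalid τ g hleg
  have hconf : ConformsSecond τ (SSplay τ g) := by
    intro n hn
    rw [SSplay_odd τ g hn, SShist_eq]
  obtain ⟨⟨t, ht, hts⟩, hnf⟩ := hwin (SSplay τ g) hvalid hconf
  obtain ⟨f, hf, hfg⟩ := hsym t ht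
  refine hnf ⟨f, hf, fun x hx => ?_⟩
  obtain ⟨b, hb, rfl⟩ := hfg hx
  exact SSkey hinv hfpf (hts hb)
end
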